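/- Let Ω ⊆ ℂⁿ be a bounded domain, let u ∈ ℳ and let 0 < α < 1. Then the functions log⁺ u = max{log u, 0} and u^α · log⁺ u are tame. -/

import Mathlib

/-!
The functions `φ(x) = x ^ α log⁺ x` with `α < 1` (`α = 0` gives `log⁺`) grow sublinearly, so for
every `ε > 0` there is `λ ≥ 0` with `(φ(x) - λ)⁺ ≤ ε x` on `[0, +∞]`. If `v` is a
plurisuperharmonic majorant of `u`, then `ε v` is admissible for `R_λ (φ ∘ u)`; hence
`inf_λ S_λ (φ ∘ u) ≤ ε v` for all `ε > 0`, i.e. `inf_λ S_λ (φ ∘ u) ≤ 0` wherever `v < +∞`.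

That set is dense in `Ω`. If a plurisubharmonic `w` is `-∞` near the point `z + e` of a disc
`z + 𝔻 e ⊆ Ω`, it is `-∞` on an arc `|θ| ≤ η` of the boundary circle, and the maximum principle
against `M + (2 + 2 cos η) ^ k - P_k`, with `M` a bound of `w` on the circle,
`Re P_k(e^{iθ}) = (2 + 2 cos θ) ^ k` and `P_k(0) = binom(2k, k)`, gives `w(z) = -∞` because
`binom(2k, k)` outgrows `(2 + 2 cos η) ^ k`. So the interior of `{w = -∞}` is open and closed in
the domain `Ω`, hence empty. As `S_λ (φ ∘ u) ≥ 0`, the regularization yields `S (φ ∘ u) = 0`.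
-/

open Complex Polynomial Filter Set Topology

noncomputable section

/-- `u` is plurisubharmonic on `Ω ⊆ ℂⁿ`: it is upper semicontinuous on `Ω`, takes values in
`[-∞, ∞)`, is not identically `-∞`, and on every closed disc of every complex line contained
in `Ω` it satisfies the maximum principle against real parts of complex polynomials
(an equivalent formulation of subharmonicity of the restriction to every complex line). -/
def IsPSH {n : ℕ} (Ω : Set (Fin n → ℂ)) (u : (Fin n → ℂ) → EReal) : Prop :=
  UpperSemicontinuousOn u Ω ∧
  (∀ z ∈ Ω, u z ≠ ⊤) ∧
  (∃ z ∈ Ω, u z ≠ ⊥) ∧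
  ∀ z ∈ Ω, ∀ w : Fin n → ℂ, ∀ r : ℝ, 0 < r →
    (∀ ζ : ℂ, ‖ζ‖ ≤ r → z + ζ • w ∈ Ω) →
    ∀ p : Polynomial ℂ,
      (∀ ζ : ℂ, ‖ζ‖ = r → u (z + ζ • w) ≤ (((p.eval ζ).re : ℝ) : EReal)) →
      ∀ ζ : ℂ, ‖ζ‖ ≤ r → u (z + ζ • w) ≤ (((p.eval ζ).re : ℝ) : EReal)

/-- `v` is plurisuperharmonic on `Ω` iff `-v` is plurisubharmonic on `Ω`. -/
def IsPSupH {n : ℕ} (Ω : Set (Fin n → ℂ)) (v : (Fin n → ℂ) → EReal) : Prop :=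
  IsPSH Ω (fun z => -(v z))

/-- `f` belongs to the class `ℳ`: `f : Ω → [0, +∞]` admits a plurisuperharmonic
majorant on `Ω`. -/
def MemM {n : ℕ} (Ω : Set (Fin n → ℂ)) (f : (Fin n → ℂ) → EReal) : Prop :=
  (∀ z ∈ Ω, 0 ≤ f z) ∧ ∃ v, IsPSupH Ω v ∧ ∀ z ∈ Ω, f z ≤ v z

/-- The reduced function `R_λ f`: the pointwise infimum of all plurisuperharmonic
majorants of `(f - λ)⁺ = max {f - λ, 0}` on `Ω`. -/
def Rop {n : ℕ} (Ω : Set (Fin n → ℂ)) (f : (Fin n → ℂ) → EReal) (lam : ℝ)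
    (z : Fin n → ℂ) : EReal :=
  sInf { y | ∃ v, IsPSupH Ω v ∧ (∀ ζ ∈ Ω, max (f ζ - (lam : EReal)) 0 ≤ v ζ) ∧ y = v z }

/-- Lower semicontinuous regularization of `g` relative to the set `A`:
`g_*(z) = liminf_{A ∋ ζ → z} g(ζ)`. -/
def lscReg {n : ℕ} (A : Set (Fin n → ℂ)) (g : (Fin n → ℂ) → EReal)
    (z : Fin n → ℂ) : EReal :=
  liminf g (nhdsWithin z A)

/-- Upper semicontinuous regularization of `g` relative to the set `A`:
`g*(z) = limsup_{A ∋ ζ → z} g(ζ)`. -/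
def uscReg {n : ℕ} (A : Set (Fin n → ℂ)) (g : (Fin n → ℂ) → EReal)
    (z : Fin n → ℂ) : EReal :=
  limsup g (nhdsWithin z A)

/-- `S_λ f`: the lower semicontinuous regularization of `R_λ f` on `Ω`. -/
def Slam {n : ℕ} (Ω : Set (Fin n → ℂ)) (f : (Fin n → ℂ) → EReal) (lam : ℝ) :
    (Fin n → ℂ) → EReal :=
  lscReg Ω (Rop Ω f lam)

/-- The operator `S`: the lower semicontinuous regularization of
`lim_{λ → ∞} S_λ f`; since `λ ↦ S_λ f` is decreasing on `λ ≥ 0`, this limit is the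
infimum over `λ ≥ 0`. -/
def Sop {n : ℕ} (Ω : Set (Fin n → ℂ)) (f : (Fin n → ℂ) → EReal) :
    (Fin n → ℂ) → EReal :=
  lscReg Ω (fun z => ⨅ (lam : ℝ) (_ : 0 ≤ lam), Slam Ω f lam z)

/-- `f` is tame on `Ω` if `S f ≡ 0`. -/
def Tame {n : ℕ} (Ω : Set (Fin n → ℂ)) (f : (Fin n → ℂ) → EReal) : Prop :=
  ∀ z ∈ Ω, Sop Ω f z = 0

/-- `E` is a pluripolar subset of `Ω`: `E ⊆ {w = -∞}` for some plurisubharmonic `w` on `Ω`. -/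
def Pluripolar {n : ℕ} (Ω : Set (Fin n → ℂ)) (E : Set (Fin n → ℂ)) : Prop :=
  E ⊆ Ω ∧ ∃ w, IsPSH Ω w ∧ ∀ z ∈ E, w z = ⊥

/-- The power `x ^ α` for `x ∈ [0, +∞] ⊆ EReal` and a real exponent `α`. -/
def erealRpow (x : EReal) (α : ℝ) : EReal :=
  if x = ⊤ then ⊤ else ((x.toReal ^ α : ℝ) : EReal)

/-- `log⁺ x = max {log x, 0}` for `x ∈ [0, +∞] ⊆ EReal`. -/
def erealLogPlus (x : EReal) : EReal :=
  if x = ⊤ then ⊤ else ((max (Real.log x.toReal) 0 : ℝ) : EReal)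

theorem Real.eventually_rpow_mul_log_le_mul {α ε : ℝ} (hα : α < 1) (hε : 0 < ε) :
    ∀ᶠ r in atTop, r ^ α * Real.log r ≤ ε * r := by
  filter_upwards [(isLittleO_log_rpow_atTop (sub_pos.2 hα)).bound hε,
    eventually_gt_atTop 0] with r hlog hr
  rw [Real.norm_eq_abs, Real.norm_of_nonneg (by positivity)] at hlog
  calc r ^ α * Real.log r ≤ r ^ α * (ε * r ^ (1 - α)) :=
        mul_le_mul_of_nonneg_left ((le_abs_self _).trans hlog) (by positivity)
    _ = ε * r := by rw [mul_left_comm, ← Real.rpow_add hr, add_sub_cancel, Real.rpow_one]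

theorem Real.exists_rpow_mul_max_log_le {α ε : ℝ} (hα : α < 1) (hε : 0 < ε) :
    ∃ lam : ℝ, 0 ≤ lam ∧ ∀ r : ℝ, 0 ≤ r → r ^ α * max (Real.log r) 0 ≤ lam + ε * r := by
  obtain ⟨R, hR⟩ := eventually_atTop.1 (Real.eventually_rpow_mul_log_le_mul hα hε)
  have hcont : ContinuousOn (fun r : ℝ => r ^ α * Real.log r) (Icc 1 R) := by
    refine ContinuousOn.mul (fun r hr => ?_) (Real.continuousOn_log.mono fun r hr => ?_)
    · exact (Real.continuousAt_rpow_const _ _ (Or.inl (by linarith [hr.1]))).continuousWithinAt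
    · exact (zero_lt_one.trans_le hr.1).ne'
  obtain ⟨C, hC⟩ := isCompact_Icc.bddAbove_image hcont
  refine ⟨max C 0, le_max_right _ _, fun r hr => ?_⟩
  have hεr : 0 ≤ ε * r := by positivity
  rcases le_total r 1 with h1 | h1
  · rw [max_eq_right (Real.log_nonpos hr h1), mul_zero]
    linarith [le_max_right C 0]
  rw [max_eq_left (Real.log_nonneg h1)]
  rcases le_total r R with h2 | h2
  · linarith [hC ⟨r, ⟨h1, h2⟩, rfl⟩, le_max_left C 0]
  · linarith [hR r h2, le_max_right C 0]

theorem erealRpow_mul_erealLogPlus_le {α ε : ℝ} (hα : α < 1) (hε : 0 < ε) :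
    ∃ lam : ℝ, 0 ≤ lam ∧ ∀ x : EReal, 0 ≤ x →
      max (erealRpow x α * erealLogPlus x - lam) 0 ≤ ε * x := by
  obtain ⟨lam, hlam0, hlam⟩ := Real.exists_rpow_mul_max_log_le hα hε
  refine ⟨lam, hlam0, fun x hx => ?_⟩
  induction x using EReal.rec with
  | bot => simp at hx
  | coe r =>
    have hr : 0 ≤ r := by exact_mod_cast hx
    simp only [erealRpow, erealLogPlus, EReal.coe_ne_top, if_false, EReal.toReal_coe]
    rw [← EReal.coe_mul, ← EReal.coe_sub, ← EReal.coe_mul]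
    exact max_le (EReal.coe_le_coe_iff.2 (by linarith [hlam r hr]))
      (by exact_mod_cast by positivity)
  | top => simp [erealRpow, erealLogPlus, EReal.coe_mul_top_of_pos hε]

theorem erealRpow_zero_mul_erealLogPlus (x : EReal) :
    erealRpow x 0 * erealLogPlus x = erealLogPlus x := by
  by_cases hx : x = ⊤ <;> simp [erealRpow, erealLogPlus, hx]

/-- On the unit circle `Re ζ ^ |m| = Re ζ ^ m`, so `Re (binomKernel k) ζ = Re (ζ⁻ᵏ (1 + ζ) ^ 2k)`,
which is `|1 + ζ| ^ 2k`. -/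
def binomKernel (k : ℕ) : ℂ[X] :=
  ∑ j ∈ Finset.range (2 * k + 1), C ((2 * k).choose j : ℂ) * X ^ ((j : ℤ) - k).natAbs

theorem binomKernel_eval_zero (k : ℕ) : (binomKernel k).eval 0 = k.centralBinom := by
  rw [binomKernel, eval_finsetSum, Finset.sum_eq_single k]
  · simp [Nat.centralBinom]
  · intro j _ hjk
    have : ((j : ℤ) - k).natAbs ≠ 0 := by omega
    simp [zero_pow this]
  · simp only [Finset.mem_range]
    omega

theorem sum_choose_mul_exp_eq_two_add_two_cos_pow (k : ℕ) (θ : ℝ) :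
    ∑ j ∈ Finset.range (2 * k + 1), ((2 * k).choose j : ℂ) * cexp ((((j : ℝ) - k) * θ : ℝ) * I) =
      ((2 + 2 * Real.cos θ) ^ k : ℝ) := by
  set A := cexp (θ * I)
  have hA : A * cexp (-(θ * I)) = 1 := by rw [← exp_add, add_neg_cancel, exp_zero]
  have hbase : ((2 + 2 * Real.cos θ : ℝ) : ℂ) = (1 + A) ^ 2 * cexp (-(θ * I)) := by
    push_cast
    rw [two_cos, neg_mul]
    linear_combination (-A - 2) * hA
  have hterm : ∀ j : ℕ, cexp ((((j : ℝ) - k) * θ : ℝ) * I) = A ^ j * cexp (-(θ * I)) ^ k := by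
    intro j
    rw [← exp_nat_mul, ← exp_nat_mul, ← exp_add]
    push_cast
    ring_nf
  simp_rw [ofReal_pow, hbase, mul_pow, ← pow_mul, add_comm (1 : ℂ), add_pow, Finset.sum_mul,
    hterm]
  exact Finset.sum_congr rfl fun j _ => by ring

theorem binomKernel_eval_exp_re (k : ℕ) (θ : ℝ) :
    ((binomKernel k).eval (cexp (θ * I))).re = (2 + 2 * Real.cos θ) ^ k := by
  rw [← ofReal_re ((2 + 2 * Real.cos θ) ^ k), ← sum_choose_mul_exp_eq_two_add_two_cos_pow,
    binomKernel, eval_finsetSum, re_sum, re_sum]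
  refine Finset.sum_congr rfl fun j _ => ?_
  have habs : ((((j : ℤ) - k).natAbs : ℕ) : ℝ) = |(j : ℝ) - k| := by
    rw [Nat.cast_natAbs, Int.cast_abs]
    push_cast
    rfl
  have hpow : cexp (θ * I) ^ ((j : ℤ) - k).natAbs = cexp ((|(j : ℝ) - k| * θ : ℝ) * I) := by
    rw [← exp_nat_mul, ← ofReal_natCast, habs]
    push_cast
    ring_nf
  have hcos : Real.cos (|(j : ℝ) - k| * θ) = Real.cos (((j : ℝ) - k) * θ) := by
    rcases abs_choice ((j : ℝ) - k) with h | h <;> rw [h]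
    rw [neg_mul, Real.cos_neg]
  rw [eval_mul, eval_C, eval_pow, eval_X, hpow, ← ofReal_natCast, re_ofReal_mul, re_ofReal_mul,
    exp_ofReal_mul_I_re, exp_ofReal_mul_I_re, hcos]

theorem exists_pow_add_le_centralBinom {b : ℝ} (hb0 : 0 ≤ b) (hb1 : b < 1) (K : ℝ) :
    ∃ k : ℕ, (4 * b) ^ k + K ≤ k.centralBinom := by
  have hlim : Tendsto (fun k : ℕ => 2 * (k * b ^ k) + 2 * |K| * (k * (1 / 4 : ℝ) ^ k))
      atTop (𝓝 0) := by
    simpa using ((tendsto_self_mul_const_pow_of_lt_one hb0 hb1).const_mul 2).add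
      ((tendsto_self_mul_const_pow_of_lt_one (r := 1 / 4) (by norm_num) (by norm_num)).const_mul
        (2 * |K|))
  obtain ⟨k, hk1, hk⟩ :=
    ((eventually_ge_atTop 1).and (hlim.eventually (gt_mem_nhds one_pos))).exists
  refine ⟨k, le_of_mul_le_mul_left ?_ (by positivity : (0 : ℝ) < 2 * k)⟩
  have h4 : (4 : ℝ) ^ k * (1 / 4) ^ k = 1 := by rw [← mul_pow]; norm_num
  calc 2 * k * ((4 * b) ^ k + K) ≤ 2 * k * ((4 * b) ^ k + |K|) := by gcongr; exact le_abs_self K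
    _ = 4 ^ k * (2 * (k * b ^ k) + 2 * |K| * (k * (1 / 4) ^ k)) := by
        rw [mul_pow]; linear_combination (-2 * k * |K|) * h4
    _ ≤ 4 ^ k := mul_le_of_le_one_right (by positivity) hk.le
    _ ≤ 2 * k * k.centralBinom := by
        exact_mod_cast Nat.four_pow_le_two_mul_self_mul_centralBinom k hk1

theorem UpperSemicontinuousOn.exists_le_coe_of_isCompact {X : Type*} [TopologicalSpace X]
    {f : X → EReal} {s : Set X} (hf : UpperSemicontinuousOn f s) (hs : IsCompact s)
    (htop : ∀ x ∈ s, f x ≠ ⊤) : ∃ M : ℝ, ∀ x ∈ s, f x ≤ M := by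
  rcases s.eq_empty_or_nonempty with rfl | hne
  · exact ⟨0, by simp⟩
  obtain ⟨a, ha, hmax⟩ := hf.exists_isMaxOn hne hs
  exact ⟨(f a).toReal, fun x hx => (hmax hx).trans (EReal.le_coe_toReal (htop a ha))⟩

theorem EReal.nonpos_of_forall_le_mul {x a : EReal} (ha : a ≠ ⊤)
    (h : ∀ ε : ℝ, 0 < ε → x ≤ ε * a) : x ≤ 0 := by
  induction a using EReal.rec with
  | bot => exact (h 1 one_pos).trans (by simp)
  | coe t =>
    have hlim : Tendsto (fun ε : ℝ => ((ε * t : ℝ) : EReal)) (𝓝[>] 0) (𝓝 0) :=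
      ((continuous_coe_real_ereal.comp (continuous_id.mul continuous_const)).tendsto' 0 0
        (by simp)).mono_left nhdsWithin_le_nhds
    exact ge_of_tendsto hlim (eventually_nhdsWithin_of_forall fun ε hε => by
      rw [EReal.coe_mul]; exact h ε hε)
  | top => exact absurd rfl ha

namespace IsPSH

variable {n : ℕ} {Ω : Set (Fin n → ℂ)} {w : (Fin n → ℂ) → EReal}

theorem const_mul (hw : IsPSH Ω w) {ε : ℝ} (hε : 0 < ε) :
    IsPSH Ω fun z => (ε : EReal) * w z := by
  have hε' : (0 : EReal) < ε := by exact_mod_cast hε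
  have hle : ∀ (x : EReal) (a : ℝ), (ε : EReal) * x ≤ a ↔ x ≤ ((a / ε : ℝ) : EReal) := by
    intro x a
    rw [EReal.coe_div, EReal.le_div_iff_mul_le hε' (EReal.coe_ne_top ε), mul_comm]
  have hcont : Continuous fun x : EReal => (ε : EReal) * x :=
    continuous_iff_continuousAt.2 fun x =>
      (EReal.continuousAt_mul (Or.inl hε'.ne') (Or.inl hε'.ne') (Or.inl (EReal.coe_ne_bot ε))
        (Or.inl (EReal.coe_ne_top ε))).comp (continuous_const.prodMk continuous_id).continuousAt
  obtain ⟨husc, htop, ⟨z₀, hz₀, hbot⟩, hmax⟩ := hw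
  refine ⟨hcont.comp_upperSemicontinuousOn husc fun x y hxy => mul_le_mul_of_nonneg_left hxy hε'.le,
    fun z hz => (EReal.mul_ne_top _ _).2 ⟨Or.inl (EReal.coe_ne_bot ε), Or.inl hε'.le,
      Or.inl (EReal.coe_ne_top ε), Or.inr (htop z hz)⟩,
    ⟨z₀, hz₀, (EReal.mul_ne_bot _ _).2 ⟨Or.inl (EReal.coe_ne_bot ε), Or.inr hbot,
      Or.inl (EReal.coe_ne_top ε), Or.inl hε'.le⟩⟩, fun z hz e r hr hdisc p hp ζ hζ => ?_⟩
  have hre : ∀ ξ : ℂ, ((C ((ε⁻¹ : ℝ) : ℂ) * p).eval ξ).re = (p.eval ξ).re / ε := fun ξ => by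
    rw [eval_mul, eval_C, re_ofReal_mul, div_eq_inv_mul]
  rw [hle, ← hre]
  exact hmax z hz e r hr hdisc _ (fun ξ hξ => by rw [hre, ← hle]; exact hp ξ hξ) ζ hζ

section Disc

variable (hw : IsPSH Ω w) {z e : Fin n → ℂ} (hz : z ∈ Ω)
  (hdisc : ∀ ζ : ℂ, ‖ζ‖ ≤ 1 → z + ζ • e ∈ Ω)
include hw hz hdisc

theorem le_sub_centralBinom {η M : ℝ} (hη0 : 0 ≤ η)
    (hM : ∀ ζ : ℂ, ‖ζ‖ = 1 → w (z + ζ • e) ≤ M)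
    (harc : ∀ θ : ℝ, |θ| ≤ η → w (z + cexp (θ * I) • e) = ⊥) (k : ℕ) :
    w z ≤ ((M + (2 + 2 * Real.cos η) ^ k - k.centralBinom : ℝ) : EReal) := by
  set q := C ((M + (2 + 2 * Real.cos η) ^ k : ℝ) : ℂ) - binomKernel k
  have hq : ∀ ζ, (q.eval ζ).re = M + (2 + 2 * Real.cos η) ^ k - ((binomKernel k).eval ζ).re :=
    fun ζ => by rw [eval_sub, eval_C, sub_re, ofReal_re]
  have hmax := hw.2.2.2 z hz e 1 one_pos hdisc q ?_ 0 (by simp)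
  · simpa [hq, binomKernel_eval_zero] using hmax
  intro ζ hζ
  set θ := ζ.arg
  have hζθ : ζ = cexp (θ * I) := by simpa [hζ] using (norm_mul_exp_arg_mul_I ζ).symm
  rcases le_or_gt |θ| η with h | h
  · rw [hζθ, harc θ h]
    exact bot_le
  refine (hM ζ hζ).trans ?_
  rw [EReal.coe_le_coe_iff, hq, hζθ, binomKernel_eval_exp_re]
  have hcos : Real.cos θ ≤ Real.cos η := by
    rw [← Real.cos_abs]
    exact Real.cos_le_cos_of_nonneg_of_le_pi hη0 (abs_arg_le_pi ζ) h.le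
  have := pow_le_pow_left₀ (by linarith [Real.neg_one_le_cos θ])
    (by linarith : 2 + 2 * Real.cos θ ≤ 2 + 2 * Real.cos η) k
  linarith

theorem eq_bot_of_eq_bot_on_arc {η : ℝ} (hη0 : 0 < η) (hηπ : η ≤ Real.pi)
    (harc : ∀ θ : ℝ, |θ| ≤ η → w (z + cexp (θ * I) • e) = ⊥) : w z = ⊥ := by
  obtain ⟨M, hM⟩ : ∃ M : ℝ, ∀ ζ : ℂ, ‖ζ‖ = 1 → w (z + ζ • e) ≤ M := by
    set K := (fun ζ : ℂ => z + ζ • e) '' Metric.sphere 0 1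
    have hK : IsCompact K := (isCompact_sphere 0 1).image (by fun_prop)
    have hKΩ : K ⊆ Ω := by
      rintro _ ⟨ζ, hζ, rfl⟩
      exact hdisc ζ (mem_sphere_zero_iff_norm.1 hζ).le
    obtain ⟨M, hM⟩ :=
      (hw.1.mono hKΩ).exists_le_coe_of_isCompact hK fun x hx => hw.2.1 x (hKΩ hx)
    exact ⟨M, fun ζ hζ => hM _ ⟨ζ, mem_sphere_zero_iff_norm.2 hζ, rfl⟩⟩
  have hcos : Real.cos η < 1 := by
    simpa using Real.cos_lt_cos_of_nonneg_of_le_pi le_rfl hηπ hη0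
  refine (EReal.eq_bot_iff_forall_lt _).2 fun y => ?_
  obtain ⟨k, hk⟩ := exists_pow_add_le_centralBinom (b := (1 + Real.cos η) / 2)
    (by linarith [Real.neg_one_le_cos η]) (by linarith) (M - y + 1)
  refine (hw.le_sub_centralBinom hz hdisc hη0.le hM harc k).trans_lt (EReal.coe_lt_coe_iff.2 ?_)
  rw [show 4 * ((1 + Real.cos η) / 2) = 2 + 2 * Real.cos η by ring] at hk
  linarith

theorem eq_bot_of_eventually_eq_bot (hbot : ∀ᶠ y in 𝓝 (z + e), w y = ⊥) : w z = ⊥ := by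
  have hlim : Tendsto (fun θ : ℝ => z + cexp (θ * I) • e) (𝓝 0) (𝓝 (z + e)) := by
    simpa using ((by fun_prop : Continuous fun θ : ℝ => z + cexp (θ * I) • e).tendsto 0)
  obtain ⟨η, hη, harc⟩ := Metric.eventually_nhds_iff.1 (hlim.eventually hbot)
  refine hw.eq_bot_of_eq_bot_on_arc hz hdisc (η := min (η / 2) Real.pi) (by positivity)
    (min_le_right _ _) fun θ hθ => harc ?_
  rw [Real.dist_0_eq_abs]
  linarith [min_le_left (η / 2) Real.pi]

end Disc

theorem eventually_eq_bot_of_mem_closure (hΩo : IsOpen Ω) (hw : IsPSH Ω w) {c : Fin n → ℂ}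
    (hc : c ∈ Ω) (hcl : c ∈ closure {c' | ∀ᶠ y in 𝓝 c', w y = ⊥}) :
    ∀ᶠ y in 𝓝 c, w y = ⊥ := by
  obtain ⟨δ, hδ, hball⟩ := Metric.isOpen_iff.1 hΩo c hc
  obtain ⟨c', hc', hcc'⟩ := Metric.mem_closure_iff.1 hcl (δ / 3) (by positivity)
  refine Metric.eventually_nhds_iff.2 ⟨δ / 3, by positivity, fun z hz => ?_⟩
  have hdisc : ∀ ζ : ℂ, ‖ζ‖ ≤ 1 → z + ζ • (c' - z) ∈ Ω := by
    intro ζ hζ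
    refine hball (Metric.mem_ball.2 ?_)
    calc dist (z + ζ • (c' - z)) c ≤ dist (z + ζ • (c' - z)) z + dist z c := dist_triangle _ _ _
      _ = ‖ζ‖ * dist c' z + dist z c := by rw [dist_self_add_left, norm_smul, ← dist_eq_norm]
      _ ≤ dist c' z + dist z c := by gcongr; exact mul_le_of_le_one_left dist_nonneg hζ
      _ ≤ dist c' c + dist c z + dist z c := by gcongr; exact dist_triangle _ _ _
      _ < δ := by rw [dist_comm c' c, dist_comm c z]; linarith
  refine hw.eq_bot_of_eventually_eq_bot (hball (Metric.mem_ball.2 (by linarith))) hdisc ?_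
  rwa [add_sub_cancel]

theorem frequently_ne_bot (hΩo : IsOpen Ω) (hΩc : IsPreconnected Ω) (hw : IsPSH Ω w)
    {z : Fin n → ℂ} (hz : z ∈ Ω) : ∃ᶠ y in 𝓝 z, w y ≠ ⊥ := by
  intro hbot
  have hΩU : Ω ⊆ {c | ∀ᶠ y in 𝓝 c, w y = ⊥} :=
    hΩc.subset_of_closure_inter_subset isOpen_setOfPred_eventually_nhds ⟨z, hz, by simpa using hbot⟩
      fun c ⟨hcl, hc⟩ => hw.eventually_eq_bot_of_mem_closure hΩo hc hcl
  obtain ⟨z₀, hz₀, hne⟩ := hw.2.2.1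
  exact hne (hΩU hz₀).self_of_nhds

end IsPSH

theorem IsPSupH.const_mul {n : ℕ} {Ω : Set (Fin n → ℂ)} {v : (Fin n → ℂ) → EReal}
    (hv : IsPSupH Ω v) {ε : ℝ} (hε : 0 < ε) : IsPSupH Ω fun z => (ε : EReal) * v z := by
  simpa only [IsPSupH, mul_neg] using IsPSH.const_mul hv hε

section Reduction

variable {n : ℕ} {Ω A : Set (Fin n → ℂ)} {g f : (Fin n → ℂ) → EReal} {lam : ℝ}

theorem le_lscReg {c : EReal} (h : ∀ ζ ∈ A, c ≤ g ζ) (z : Fin n → ℂ) : c ≤ lscReg A g z :=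
  le_liminf_of_le (by isBoundedDefault) (eventually_mem_nhdsWithin.mono h)

theorem lscReg_le {z : Fin n → ℂ} (hz : z ∈ A) : lscReg A g z ≤ g z :=
  liminf_le_of_frequently_le'
    (Frequently.filter_mono (p := fun a => g a ≤ g z) (frequently_pure.2 le_rfl)
      (pure_le_nhdsWithin hz))

theorem Rop_nonneg {z : Fin n → ℂ} (hz : z ∈ Ω) : 0 ≤ Rop Ω f lam z :=
  le_sInf <| by
    rintro _ ⟨v, -, hv, rfl⟩
    exact (le_max_right _ _).trans (hv z hz)

theorem Rop_le {v : (Fin n → ℂ) → EReal} (hv : IsPSupH Ω v)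
    (hfv : ∀ ζ ∈ Ω, max (f ζ - lam) 0 ≤ v ζ) (z : Fin n → ℂ) : Rop Ω f lam z ≤ v z :=
  sInf_le ⟨v, hv, hfv, rfl⟩

theorem tame_comp_of_forall_le_mul (hΩo : IsOpen Ω) (hΩc : IsPreconnected Ω)
    {u : (Fin n → ℂ) → EReal} (hu : MemM Ω u) {φ : EReal → EReal}
    (hφ : ∀ ε : ℝ, 0 < ε → ∃ lam : ℝ, 0 ≤ lam ∧
      ∀ x : EReal, 0 ≤ x → max (φ x - lam) 0 ≤ ε * x) :
    Tame Ω fun z => φ (u z) := by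
  obtain ⟨hu0, v, hv, huv⟩ := hu
  set g := fun z => ⨅ (lam : ℝ) (_ : 0 ≤ lam), Slam Ω (fun z => φ (u z)) lam z
  have hg0 : ∀ ζ ∈ Ω, 0 ≤ g ζ := fun ζ _ =>
    le_iInf₂ fun lam _ => le_lscReg (fun ξ hξ => Rop_nonneg hξ) ζ
  have hg_le : ∀ y ∈ Ω, v y ≠ ⊤ → g y ≤ 0 := by
    intro y hy hvy
    refine EReal.nonpos_of_forall_le_mul hvy fun ε hε => ?_
    obtain ⟨lam, hlam0, hlam⟩ := hφ ε hε
    have hmaj : ∀ ξ ∈ Ω, max (φ (u ξ) - lam) 0 ≤ ε * v ξ := fun ξ hξ =>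
      (hlam _ (hu0 ξ hξ)).trans (mul_le_mul_of_nonneg_left (huv ξ hξ) (by exact_mod_cast hε.le))
    calc g y ≤ Slam Ω _ lam y := iInf₂_le lam hlam0
      _ ≤ Rop Ω _ lam y := lscReg_le hy
      _ ≤ ε * v y := Rop_le (hv.const_mul hε) hmaj y
  intro z hz
  refine le_antisymm (liminf_le_of_frequently_le' ?_) (le_lscReg hg0 z)
  rw [hΩo.nhdsWithin_eq hz]
  refine ((IsPSH.frequently_ne_bot hΩo hΩc hv hz).and_eventually (hΩo.mem_nhds hz)).mono ?_
  rintro y ⟨hne, hy⟩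
  exact hg_le y hy fun h => hne (by simp [h])

end Reduction

theorem statement9_general {n : ℕ} (Ω : Set (Fin n → ℂ))
    (hΩo : IsOpen Ω) (hΩc : IsConnected Ω)
    (u : (Fin n → ℂ) → EReal) (hu : MemM Ω u) (α : ℝ) (hα1 : α < 1) :
    Tame Ω (fun z => erealLogPlus (u z)) ∧
    Tame Ω (fun z => erealRpow (u z) α * erealLogPlus (u z)) := by
  have htame : ∀ β : ℝ, β < 1 → Tame Ω fun z => erealRpow (u z) β * erealLogPlus (u z) :=
    fun β hβ => tame_comp_of_forall_le_mul (φ := fun x => erealRpow x β * erealLogPlus x)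
      hΩo hΩc.isPreconnected hu fun _ hε => erealRpow_mul_erealLogPlus_le hβ hε
  exact ⟨by simpa only [erealRpow_zero_mul_erealLogPlus] using htame 0 one_pos, htame α hα1⟩

/-- Corollary 3.3, remaining parts: let `Ω ⊆ ℂⁿ` be a bounded domain,
let `u ∈ ℳ` and let `0 < α < 1`. Then `log⁺ u` and `u^α · log⁺ u` are tame. -/
theorem statement9 {n : ℕ} (Ω : Set (Fin n → ℂ))
    (hΩo : IsOpen Ω) (hΩc : IsConnected Ω) (hΩb : Bornology.IsBounded Ω)
    (u : (Fin n → ℂ) → EReal) (hu : MemM Ω u) (α : ℝ) (hα0 : 0 < α) (hα1 : α < 1) :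
    Tame Ω (fun z => erealLogPlus (u z)) ∧
    Tame Ω (fun z => erealRpow (u z) α * erealLogPlus (u z)) :=
  statement9_general Ω hΩo hΩc u hu α hα1
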